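/- arXiv:1303.1259 — 2 statements merged into one kernel-verified Lean document; each statement's English description precedes it below -/
import Mathlib

section
/- Let k₁, k₂: ℝ × ℝ → ℝ be smooth functions satisfying (k₁)_t = k₁'' + 2k₂' and (k₂)_t = (2/3)(k₁k₁' − k₁''') − k₂''. Fix λ ∈ ℝ and let y₁, y₂, y₃: ℝ × ℝ → ℝ be smooth functions each satisfying yᵢ''' − (k₁yᵢ)' − k₂yᵢ = λyᵢ and (yᵢ)_t = yᵢ'' − (2/3)k₁yᵢ. Let W = |y, y', y''| be the Wronskian of y = (y₁, y₂, y₃)ᵀ. Then: (i) W is constant in both x and t; (ii) if W > 0, then γ := W^{−1/3}·y is parametrized by centroaffine arclength at each time t, its curvatures are k₁ and k̃₂ = k₂ + λ (i.e. γ''' = (k₁γ)' + (k₂ + λ)γ), and γ satisfies the curve flow γ_t = γ'' − (2/3)k₁γ. -/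
/-- `det3 u v w` is the determinant of the 3×3 matrix with columns (equivalently, rows)
`u`, `v`, `w` in `ℝ³`. -/
noncomputable def det3 (u v w : Fin 3 → ℝ) : ℝ := Matrix.det (Matrix.of ![u, v, w])

/-- Partial derivative in the first (space) variable. -/
noncomputable def pdx {E : Type*} [NormedAddCommGroup E] [NormedSpace ℝ E]
    (f : ℝ → ℝ → E) : ℝ → ℝ → E := fun x t => deriv (fun x' => f x' t) x

/-- Partial derivative in the second (time) variable. -/
noncomputable def pdt {E : Type*} [NormedAddCommGroup E] [NormedSpace ℝ E]
    (f : ℝ → ℝ → E) : ℝ → ℝ → E := fun x t => deriv (fun t' => f x t') t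

section helpers
variable {E : Type*} [NormedAddCommGroup E] [NormedSpace ℝ E]

lemma sliceX (f : ℝ → ℝ → E) (hf : ContDiff ℝ (⊤ : ℕ∞) (fun p : ℝ × ℝ => f p.1 p.2)) (x t : ℝ) :
    HasDerivAt (fun x' => f x' t) (pdx f x t) x := by
  have hd : DifferentiableAt ℝ (fun x' => f x' t) x := by
    have h : (fun x' : ℝ => f x' t) = (fun p : ℝ × ℝ => f p.1 p.2) ∘ (fun x' => (x', t)) := rfl
    rw [h]
    exact (((hf.differentiable (by simp)).comp
      ((differentiable_id).prodMk (differentiable_const t)))).differentiableAt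
  exact hd.hasDerivAt

lemma sliceT (f : ℝ → ℝ → E) (hf : ContDiff ℝ (⊤ : ℕ∞) (fun p : ℝ × ℝ => f p.1 p.2)) (x t : ℝ) :
    HasDerivAt (fun t' => f x t') (pdt f x t) t := by
  have hd : DifferentiableAt ℝ (fun t' => f x t') t := by
    have h : (fun t' : ℝ => f x t') = (fun p : ℝ × ℝ => f p.1 p.2) ∘ (fun t' => (x, t')) := rfl
    rw [h]
    exact (((hf.differentiable (by simp)).comp
      ((differentiable_const x).prodMk differentiable_id))).differentiableAt
  exact hd.hasDerivAt

lemma pdx_eq_fderiv (f : ℝ → ℝ → E) (hf : ContDiff ℝ (⊤ : ℕ∞) (fun p : ℝ × ℝ => f p.1 p.2)) (x t : ℝ) :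
    pdx f x t = fderiv ℝ (fun p : ℝ × ℝ => f p.1 p.2) (x, t) (1, 0) := by
  have hin : HasDerivAt (fun x' : ℝ => ((x', t) : ℝ × ℝ)) ((1:ℝ), (0:ℝ)) x :=
    (hasDerivAt_id x).prodMk (hasDerivAt_const x t)
  have hd := (hf.differentiable (by simp)) (x, t)
  have h : HasDerivAt (fun x' => f x' t)
      (fderiv ℝ (fun p : ℝ × ℝ => f p.1 p.2) (x, t) (1, 0)) x :=
    by have hc := (hd.hasFDerivAt).comp_hasDerivAt x hin; exact hc
  show deriv _ _ = _
  exact h.deriv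

lemma pdt_eq_fderiv (f : ℝ → ℝ → E) (hf : ContDiff ℝ (⊤ : ℕ∞) (fun p : ℝ × ℝ => f p.1 p.2)) (x t : ℝ) :
    pdt f x t = fderiv ℝ (fun p : ℝ × ℝ => f p.1 p.2) (x, t) (0, 1) := by
  have hin : HasDerivAt (fun t' : ℝ => ((x, t') : ℝ × ℝ)) ((0:ℝ), (1:ℝ)) t :=
    (hasDerivAt_const t x).prodMk (hasDerivAt_id t)
  have h : HasDerivAt (fun t' => f x t')
      (fderiv ℝ (fun p : ℝ × ℝ => f p.1 p.2) (x, t) (0, 1)) t :=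
    (((hf.differentiable (by simp)) (x, t)).hasFDerivAt).comp_hasDerivAt t hin
  show deriv _ _ = _
  exact h.deriv

lemma contDiff_pdx (f : ℝ → ℝ → E) (hf : ContDiff ℝ (⊤ : ℕ∞) (fun p : ℝ × ℝ => f p.1 p.2)) :
    ContDiff ℝ (⊤ : ℕ∞) (fun p : ℝ × ℝ => pdx f p.1 p.2) := by
  have h : (fun p : ℝ × ℝ => pdx f p.1 p.2)
      = fun p : ℝ × ℝ => fderiv ℝ (fun q : ℝ × ℝ => f q.1 q.2) p ((1:ℝ), (0:ℝ)) := by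
    funext p
    exact pdx_eq_fderiv f hf p.1 p.2
  rw [h]
  exact (hf.fderiv_right (by simp)).clm_apply contDiff_const

lemma pdt_pdx_comm (f : ℝ → ℝ → E) (hf : ContDiff ℝ (⊤ : ℕ∞) (fun p : ℝ × ℝ => f p.1 p.2)) (x t : ℝ) :
    pdt (pdx f) x t = pdx (pdt f) x t := by
  set F : ℝ × ℝ → E := fun p => f p.1 p.2 with hF
  have hF' : ContDiff ℝ (⊤ : ℕ∞) (fun p : ℝ × ℝ => fderiv ℝ F p) := hf.fderiv_right (by simp)
  have hsym := second_derivative_symmetric (f := F) (f' := fderiv ℝ F)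
    (f'' := fderiv ℝ (fderiv ℝ F) (x, t))
    (fun p => ((hf.differentiable (by simp)) p).hasFDerivAt)
    (((hF'.differentiable (by simp)) (x, t)).hasFDerivAt)
  have h1 : pdx (pdt f) x t = fderiv ℝ (fderiv ℝ F) (x, t) (1, 0) (0, 1) := by
    have hfun : (fun x' => pdt f x' t) = fun x' => fderiv ℝ F (x', t) ((0:ℝ), (1:ℝ)) := by
      funext x'
      exact pdt_eq_fderiv f hf x' t
    have hin : HasDerivAt (fun x' : ℝ => ((x', t) : ℝ × ℝ)) ((1:ℝ), (0:ℝ)) x :=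
      (hasDerivAt_id x).prodMk (hasDerivAt_const x t)
    have hc : HasDerivAt (fun x' : ℝ => fderiv ℝ F (x', t))
        (fderiv ℝ (fderiv ℝ F) (x, t) (1, 0)) x :=
      (((hF'.differentiable (by simp)) (x, t)).hasFDerivAt).comp_hasDerivAt x hin
    have happ := hc.clm_apply (hasDerivAt_const x ((0:ℝ), (1:ℝ)))
    simp only [map_zero, add_zero] at happ
    show deriv (fun x' => pdt f x' t) x = _
    rw [hfun]
    exact happ.deriv
  have h2 : pdt (pdx f) x t = fderiv ℝ (fderiv ℝ F) (x, t) (0, 1) (1, 0) := by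
    have hfun : (fun t' => pdx f x t') = fun t' => fderiv ℝ F (x, t') ((1:ℝ), (0:ℝ)) := by
      funext t'
      exact pdx_eq_fderiv f hf x t'
    have hin : HasDerivAt (fun t' : ℝ => ((x, t') : ℝ × ℝ)) ((0:ℝ), (1:ℝ)) t :=
      (hasDerivAt_const t x).prodMk (hasDerivAt_id t)
    have hc : HasDerivAt (fun t' : ℝ => fderiv ℝ F (x, t'))
        (fderiv ℝ (fderiv ℝ F) (x, t) (0, 1)) t :=
      (((hF'.differentiable (by simp)) (x, t)).hasFDerivAt).comp_hasDerivAt t hin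
    have happ := hc.clm_apply (hasDerivAt_const t ((1:ℝ), (0:ℝ)))
    simp only [map_zero, add_zero] at happ
    show deriv (fun t' => pdx f x t') t = _
    rw [hfun]
    exact happ.deriv
  rw [h1, h2, hsym (1, 0) (0, 1)]

end helpers

lemma det3_eq (u v w : Fin 3 → ℝ) :
    det3 u v w = u 0 * (v 1 * w 2 - v 2 * w 1) - u 1 * (v 0 * w 2 - v 2 * w 0)
      + u 2 * (v 0 * w 1 - v 1 * w 0) := by
  simp [det3, Matrix.det_fin_three]
  ring

lemma det3_hasDerivAt (u v w : Fin 3 → ℝ → ℝ) (u' v' w' : Fin 3 → ℝ) (x : ℝ)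
    (hu : ∀ i, HasDerivAt (u i) (u' i) x) (hv : ∀ i, HasDerivAt (v i) (v' i) x)
    (hw : ∀ i, HasDerivAt (w i) (w' i) x) :
    HasDerivAt (fun s => det3 (fun i => u i s) (fun i => v i s) (fun i => w i s))
      (det3 u' (fun i => v i x) (fun i => w i x)
        + det3 (fun i => u i x) v' (fun i => w i x)
        + det3 (fun i => u i x) (fun i => v i x) w') x := by
  have H := ((((hu 0).mul (((hv 1).mul (hw 2)).sub ((hv 2).mul (hw 1))))).sub
      ((hu 1).mul (((hv 0).mul (hw 2)).sub ((hv 2).mul (hw 0))))).add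
      ((hu 2).mul (((hv 0).mul (hw 1)).sub ((hv 1).mul (hw 0))))
  simp only [det3_eq]
  exact H.congr_deriv (by simp only [Pi.sub_apply, Pi.mul_apply]; ring)

lemma det3_repeat₁₂ (u w : Fin 3 → ℝ) : det3 u u w = 0 := by
  simp only [det3_eq]; ring

lemma det3_repeat₂₃ (u v : Fin 3 → ℝ) : det3 u v v = 0 := by
  simp only [det3_eq]; ring


/-- If `k₁`, `k₂` solve the Boussinesq curvature system and `y₁, y₂, y₃` solve the
scalar Lax system `ℒy = λy`, `y_t = ℳ₁y`, then the Wronskian `W` is constant in `x`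
and `t`, and (if `W > 0`) the curve `γ = W^{−1/3}(y₁, y₂, y₃)ᵀ` is centroaffine
arclength-parametrized with curvatures `k₁` and `k₂ + λ`, and evolves by
`γ_t = γ'' − (2/3)k₁γ`. -/
theorem lax_solutions_reconstruct_flow
    (k₁ k₂ : ℝ → ℝ → ℝ)
    (hk₁ : ContDiff ℝ (⊤ : ℕ∞) (fun p : ℝ × ℝ => k₁ p.1 p.2))
    (hk₂ : ContDiff ℝ (⊤ : ℕ∞) (fun p : ℝ × ℝ => k₂ p.1 p.2))
    (hev₁ : ∀ x t, pdt k₁ x t = pdx (pdx k₁) x t + 2 * pdx k₂ x t)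
    (hev₂ : ∀ x t, pdt k₂ x t
        = (2/3) * (k₁ x t * pdx k₁ x t - pdx (pdx (pdx k₁)) x t) - pdx (pdx k₂) x t)
    (lam : ℝ) (y : Fin 3 → ℝ → ℝ → ℝ)
    (hy : ∀ i, ContDiff ℝ (⊤ : ℕ∞) (fun p : ℝ × ℝ => y i p.1 p.2))
    (hLax : ∀ i x t, pdx (pdx (pdx (y i))) x t
        - pdx (fun x t => k₁ x t * y i x t) x t - k₂ x t * y i x t = lam * y i x t)
    (hM : ∀ i x t, pdt (y i) x t = pdx (pdx (y i)) x t - (2/3) * k₁ x t * y i x t)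
    (W : ℝ → ℝ → ℝ)
    (hW : ∀ x t, W x t = det3 (fun i => y i x t) (fun i => pdx (y i) x t)
        (fun i => pdx (pdx (y i)) x t)) :
    (∀ x t x' t' : ℝ, W x t = W x' t') ∧
    (0 < W 0 0 →
      ∀ γ : ℝ → ℝ → Fin 3 → ℝ,
        (∀ x t, γ x t = ((W 0 0) ^ (-(1/3) : ℝ)) • (fun i => y i x t)) →
        (∀ x t, det3 (γ x t) (pdx γ x t) (pdx (pdx γ) x t) = 1) ∧
        (∀ x t, pdx (pdx (pdx γ)) x t
            = pdx (fun x t => k₁ x t • γ x t) x t + (k₂ x t + lam) • γ x t) ∧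
        (∀ x t, pdt γ x t = pdx (pdx γ) x t - ((2/3) * k₁ x t) • γ x t)) := by
  -- smoothness of iterated derivatives
  have hk₁x : ContDiff ℝ (⊤ : ℕ∞) (fun p : ℝ × ℝ => pdx k₁ p.1 p.2) := contDiff_pdx k₁ hk₁
  have hyx : ∀ i, ContDiff ℝ (⊤ : ℕ∞) (fun p : ℝ × ℝ => pdx (y i) p.1 p.2) :=
    fun i => contDiff_pdx (y i) (hy i)
  have hyxx : ∀ i, ContDiff ℝ (⊤ : ℕ∞) (fun p : ℝ × ℝ => pdx (pdx (y i)) p.1 p.2) :=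
    fun i => contDiff_pdx _ (hyx i)
  have hyxxx : ∀ i, ContDiff ℝ (⊤ : ℕ∞) (fun p : ℝ × ℝ => pdx (pdx (pdx (y i))) p.1 p.2) :=
    fun i => contDiff_pdx _ (hyxx i)
  -- slice derivatives
  have sK := sliceX k₁ hk₁
  have sK1 := sliceX (pdx k₁) hk₁x
  have sL := sliceX k₂ hk₂
  have sY : ∀ i, ∀ x t, HasDerivAt (fun x' => y i x' t) (pdx (y i) x t) x :=
    fun i => sliceX (y i) (hy i)
  have sY1 : ∀ i, ∀ x t, HasDerivAt (fun x' => pdx (y i) x' t) (pdx (pdx (y i)) x t) x :=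
    fun i => sliceX (pdx (y i)) (hyx i)
  have sY2 : ∀ i, ∀ x t,
      HasDerivAt (fun x' => pdx (pdx (y i)) x' t) (pdx (pdx (pdx (y i))) x t) x :=
    fun i => sliceX (pdx (pdx (y i))) (hyxx i)
  have sY3 : ∀ i, ∀ x t,
      HasDerivAt (fun x' => pdx (pdx (pdx (y i))) x' t) (pdx (pdx (pdx (pdx (y i)))) x t) x :=
    fun i => sliceX (pdx (pdx (pdx (y i)))) (hyxxx i)
  have tY : ∀ i, ∀ x t, HasDerivAt (fun t' => y i x t') (pdt (y i) x t) t :=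
    fun i => sliceT (y i) (hy i)
  have tY1 : ∀ i, ∀ x t, HasDerivAt (fun t' => pdx (y i) x t') (pdt (pdx (y i)) x t) t :=
    fun i => sliceT (pdx (y i)) (hyx i)
  have tY2 : ∀ i, ∀ x t,
      HasDerivAt (fun t' => pdx (pdx (y i)) x t') (pdt (pdx (pdx (y i))) x t) t :=
    fun i => sliceT (pdx (pdx (y i))) (hyxx i)
  -- third x-derivative from the Lax equation
  have e3 : ∀ i x t, pdx (pdx (pdx (y i))) x t
      = (pdx k₁ x t + k₂ x t + lam) * y i x t + k₁ x t * pdx (y i) x t := by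
    intro i x t
    have hp : pdx (fun x t => k₁ x t * y i x t) x t
        = pdx k₁ x t * y i x t + k₁ x t * pdx (y i) x t := by
      show deriv _ _ = _
      exact ((sK x t).mul (sY i x t)).deriv
    have h := hLax i x t
    rw [hp] at h
    linear_combination h
  -- fourth x-derivative
  have e4 : ∀ i x t, pdx (pdx (pdx (pdx (y i)))) x t
      = (pdx (pdx k₁) x t + pdx k₂ x t) * y i x t
        + (2 * pdx k₁ x t + k₂ x t + lam) * pdx (y i) x t
        + k₁ x t * pdx (pdx (y i)) x t := by
    intro i x t
    have hfun : (fun x' => pdx (pdx (pdx (y i))) x' t)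
        = fun x' => (pdx k₁ x' t + k₂ x' t + lam) * y i x' t + k₁ x' t * pdx (y i) x' t :=
      funext fun x' => e3 i x' t
    have H := ((((sK1 x t).add (sL x t)).add (hasDerivAt_const x lam)).mul (sY i x t)).add
      ((sK x t).mul (sY1 i x t))
    show deriv _ _ = _
    rw [hfun]
    refine H.deriv.trans ?_
    simp only [Pi.add_apply]
    ring
  -- mixed derivatives from the evolution equation and Clairaut
  have et1 : ∀ i x t, pdt (pdx (y i)) x t
      = pdx (pdx (pdx (y i))) x t
        - (2/3) * (pdx k₁ x t * y i x t + k₁ x t * pdx (y i) x t) := by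
    intro i x t
    rw [pdt_pdx_comm (y i) (hy i) x t]
    have hfun : (fun x' => pdt (y i) x' t)
        = fun x' => pdx (pdx (y i)) x' t - 2/3 * k₁ x' t * y i x' t :=
      funext fun x' => hM i x' t
    have H := (sY2 i x t).sub ((HasDerivAt.const_mul (2/3 : ℝ) (sK x t)).mul (sY i x t))
    show deriv _ _ = _
    rw [hfun]
    refine H.deriv.trans ?_
    ring
  have et2 : ∀ i x t, pdt (pdx (pdx (y i))) x t
      = pdx (pdx (pdx (pdx (y i)))) x t
        - (2/3) * (pdx (pdx k₁) x t * y i x t + 2 * pdx k₁ x t * pdx (y i) x t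
            + k₁ x t * pdx (pdx (y i)) x t) := by
    intro i x t
    rw [pdt_pdx_comm (pdx (y i)) (hyx i) x t]
    have hfun : (fun x' => pdt (pdx (y i)) x' t)
        = fun x' => pdx (pdx (pdx (y i))) x' t
            - 2/3 * (pdx k₁ x' t * y i x' t + k₁ x' t * pdx (y i) x' t) :=
      funext fun x' => et1 i x' t
    have H := (sY3 i x t).sub (HasDerivAt.const_mul (2/3 : ℝ)
      (((sK1 x t).mul (sY i x t)).add ((sK x t).mul (sY1 i x t))))
    show deriv _ _ = _
    rw [hfun]
    refine H.deriv.trans ?_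
    ring
  -- W is constant in x
  have hWx : ∀ x t, HasDerivAt (fun x' => W x' t) 0 x := by
    intro x t
    have hfun : (fun x' => W x' t) = fun x' => det3 (fun i => y i x' t)
        (fun i => pdx (y i) x' t) (fun i => pdx (pdx (y i)) x' t) :=
      funext fun x' => hW x' t
    rw [hfun]
    have H := det3_hasDerivAt (fun i x' => y i x' t) (fun i x' => pdx (y i) x' t)
      (fun i x' => pdx (pdx (y i)) x' t)
      (fun i => pdx (y i) x t) (fun i => pdx (pdx (y i)) x t)
      (fun i => pdx (pdx (pdx (y i))) x t) x
      (fun i => sY i x t) (fun i => sY1 i x t) (fun i => sY2 i x t)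
    convert H using 1
    simp only [det3_eq, e3]
    ring
  -- W is constant in t
  have hWt : ∀ x t, HasDerivAt (fun t' => W x t') 0 t := by
    intro x t
    have hfun : (fun t' => W x t') = fun t' => det3 (fun i => y i x t')
        (fun i => pdx (y i) x t') (fun i => pdx (pdx (y i)) x t') :=
      funext fun t' => hW x t'
    rw [hfun]
    have H := det3_hasDerivAt (fun i t' => y i x t') (fun i t' => pdx (y i) x t')
      (fun i t' => pdx (pdx (y i)) x t')
      (fun i => pdt (y i) x t) (fun i => pdt (pdx (y i)) x t)
      (fun i => pdt (pdx (pdx (y i))) x t) t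
      (fun i => tY i x t) (fun i => tY1 i x t) (fun i => tY2 i x t)
    convert H using 1
    simp only [det3_eq, hM, et1, et2, e4, e3]
    ring
  have hconst : ∀ x t x' t' : ℝ, W x t = W x' t' := by
    intro x t x' t'
    have h1 : W x t = W x t' :=
      is_const_of_deriv_eq_zero (f := fun s => W x s)
        (fun s => (hWt x s).differentiableAt) (fun s => (hWt x s).deriv) t t'
    have h2 : W x t' = W x' t' :=
      is_const_of_deriv_eq_zero (f := fun s => W s t')
        (fun s => (hWx s t').differentiableAt) (fun s => (hWx s t').deriv) x x'
    linarith
  refine ⟨hconst, ?_⟩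
  intro hpos γ hγ
  set c : ℝ := (W 0 0) ^ (-(1/3) : ℝ) with hc
  have hγ' : ∀ x t i, γ x t i = c * y i x t := by
    intro x t i
    rw [hγ x t]
    rfl
  have g1 : ∀ x t, pdx γ x t = fun i => c * pdx (y i) x t := by
    intro x t
    have H : HasDerivAt (fun x' => γ x' t) (fun i => c * pdx (y i) x t) x := by
      rw [hasDerivAt_pi]
      intro i
      have hfun : (fun x' => γ x' t i) = fun x' => c * y i x' t :=
        funext fun x' => hγ' x' t i
      rw [hfun]
      exact HasDerivAt.const_mul c (sY i x t)
    show deriv _ _ = _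
    exact H.deriv
  have g2 : ∀ x t, pdx (pdx γ) x t = fun i => c * pdx (pdx (y i)) x t := by
    intro x t
    have H : HasDerivAt (fun x' => pdx γ x' t) (fun i => c * pdx (pdx (y i)) x t) x := by
      rw [hasDerivAt_pi]
      intro i
      have hfun : (fun x' => pdx γ x' t i) = fun x' => c * pdx (y i) x' t :=
        funext fun x' => congrFun (g1 x' t) i
      rw [hfun]
      exact HasDerivAt.const_mul c (sY1 i x t)
    show deriv _ _ = _
    exact H.deriv
  have g3 : ∀ x t, pdx (pdx (pdx γ)) x t = fun i => c * pdx (pdx (pdx (y i))) x t := by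
    intro x t
    have H : HasDerivAt (fun x' => pdx (pdx γ) x' t)
        (fun i => c * pdx (pdx (pdx (y i))) x t) x := by
      rw [hasDerivAt_pi]
      intro i
      have hfun : (fun x' => pdx (pdx γ) x' t i) = fun x' => c * pdx (pdx (y i)) x' t :=
        funext fun x' => congrFun (g2 x' t) i
      rw [hfun]
      exact HasDerivAt.const_mul c (sY2 i x t)
    show deriv _ _ = _
    exact H.deriv
  have gt : ∀ x t, pdt γ x t = fun i => c * pdt (y i) x t := by
    intro x t
    have H : HasDerivAt (fun t' => γ x t') (fun i => c * pdt (y i) x t) t := by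
      rw [hasDerivAt_pi]
      intro i
      have hfun : (fun t' => γ x t' i) = fun t' => c * y i x t' :=
        funext fun t' => hγ' x t' i
      rw [hfun]
      exact HasDerivAt.const_mul c (tY i x t)
    show deriv _ _ = _
    exact H.deriv
  have gk : ∀ x t, pdx (fun x t => k₁ x t • γ x t) x t
      = fun i => pdx k₁ x t * (c * y i x t) + k₁ x t * (c * pdx (y i) x t) := by
    intro x t
    have H : HasDerivAt (fun x' => k₁ x' t • γ x' t)
        (fun i => pdx k₁ x t * (c * y i x t) + k₁ x t * (c * pdx (y i) x t)) x := by
      rw [hasDerivAt_pi]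
      intro i
      have hfun : (fun x' => (k₁ x' t • γ x' t) i) = fun x' => k₁ x' t * (c * y i x' t) := by
        funext x'
        rw [Pi.smul_apply, smul_eq_mul, hγ' x' t i]
      rw [hfun]
      exact (sK x t).mul (HasDerivAt.const_mul c (sY i x t))
    show deriv _ _ = _
    exact H.deriv
  refine ⟨?_, ?_, ?_⟩
  · intro x t
    have hscale : det3 (γ x t) (pdx γ x t) (pdx (pdx γ) x t)
        = c ^ 3 * det3 (fun i => y i x t) (fun i => pdx (y i) x t)
            (fun i => pdx (pdx (y i)) x t) := by
      rw [hγ x t, g1 x t, g2 x t]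
      simp only [det3_eq, Pi.smul_apply, smul_eq_mul]
      ring
    have hcube : c ^ 3 * W 0 0 = 1 := by
      rw [hc, ← Real.rpow_natCast ((W 0 0) ^ (-(1/3) : ℝ)) 3, ← Real.rpow_mul hpos.le]
      norm_num
      rw [Real.rpow_neg_one]
      exact inv_mul_cancel₀ (ne_of_gt hpos)
    rw [hscale, ← hW x t, hconst x t 0 0, hcube]
  · intro x t
    rw [g3 x t, gk x t, hγ x t]
    funext i
    simp only [Pi.add_apply, Pi.smul_apply, smul_eq_mul]
    rw [e3 i x t]
    ring
  · intro x t
    rw [gt x t, g2 x t, hγ x t]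
    funext i
    simp only [Pi.sub_apply, Pi.smul_apply, smul_eq_mul]
    rw [hM i x t]
    ring
end

section
/- Let k₁, k₂: ℝ × ℝ → ℝ be smooth, and define q₁ := −k₁ and q₀ := −(1/2)k₁' − k₂. Then k₁, k₂ satisfy the system (k₁)_t = k₁'' + 2k₂', (k₂)_t = (2/3)(k₁k₁' − k₁''') − k₂'' if and only if q₀, q₁ satisfy the Boussinesq system (q₀)_t + (1/6)q₁''' + (2/3)q₁q₁' = 0 and (q₁)_t = 2q₀'. -/
section helpers

variable {f : ℝ → ℝ → ℝ}

private lemma hasDerivAt_sliceX (hf : ContDiff ℝ (⊤ : ℕ∞) (fun p : ℝ × ℝ => f p.1 p.2)) (x t : ℝ) :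
    HasDerivAt (fun x' => f x' t)
      (fderiv ℝ (fun p : ℝ × ℝ => f p.1 p.2) (x, t) (1, 0)) x := by
  have h1 : HasDerivAt (fun x' : ℝ => ((x' : ℝ), t)) ((1 : ℝ), (0 : ℝ)) x :=
    (hasDerivAt_id x).prodMk (hasDerivAt_const x t)
  have h2 := ((hf.differentiable (by simp)) (x, t)).hasFDerivAt
  exact h2.comp_hasDerivAt x h1

private lemma hasDerivAt_sliceT (hf : ContDiff ℝ (⊤ : ℕ∞) (fun p : ℝ × ℝ => f p.1 p.2)) (x t : ℝ) :
    HasDerivAt (fun t' => f x t')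
      (fderiv ℝ (fun p : ℝ × ℝ => f p.1 p.2) (x, t) (0, 1)) t := by
  have h1 : HasDerivAt (fun t' : ℝ => ((x : ℝ), t')) ((0 : ℝ), (1 : ℝ)) t :=
    (hasDerivAt_const t x).prodMk (hasDerivAt_id t)
  have h2 := ((hf.differentiable (by simp)) (x, t)).hasFDerivAt
  exact h2.comp_hasDerivAt t h1

private lemma pdx_eq (hf : ContDiff ℝ (⊤ : ℕ∞) (fun p : ℝ × ℝ => f p.1 p.2)) (x t : ℝ) :
    pdx f x t = fderiv ℝ (fun p : ℝ × ℝ => f p.1 p.2) (x, t) (1, 0) :=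
  (hasDerivAt_sliceX hf x t).deriv

private lemma pdt_eq (hf : ContDiff ℝ (⊤ : ℕ∞) (fun p : ℝ × ℝ => f p.1 p.2)) (x t : ℝ) :
    pdt f x t = fderiv ℝ (fun p : ℝ × ℝ => f p.1 p.2) (x, t) (0, 1) :=
  (hasDerivAt_sliceT hf x t).deriv

private lemma pdx_contDiff (hf : ContDiff ℝ (⊤ : ℕ∞) (fun p : ℝ × ℝ => f p.1 p.2)) :
    ContDiff ℝ (⊤ : ℕ∞) (fun p : ℝ × ℝ => pdx f p.1 p.2) := by
  have he : (fun p : ℝ × ℝ => pdx f p.1 p.2)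
      = fun p : ℝ × ℝ => fderiv ℝ (fun q : ℝ × ℝ => f q.1 q.2) p (1, 0) := by
    funext p; exact pdx_eq hf p.1 p.2
  rw [he]
  exact (hf.fderiv_right (by simp)).clm_apply contDiff_const

private lemma pdt_contDiff (hf : ContDiff ℝ (⊤ : ℕ∞) (fun p : ℝ × ℝ => f p.1 p.2)) :
    ContDiff ℝ (⊤ : ℕ∞) (fun p : ℝ × ℝ => pdt f p.1 p.2) := by
  have he : (fun p : ℝ × ℝ => pdt f p.1 p.2)
      = fun p : ℝ × ℝ => fderiv ℝ (fun q : ℝ × ℝ => f q.1 q.2) p (0, 1) := by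
    funext p; exact pdt_eq hf p.1 p.2
  rw [he]
  exact (hf.fderiv_right (by simp)).clm_apply contDiff_const

private lemma pdx_pdt_comm (hf : ContDiff ℝ (⊤ : ℕ∞) (fun p : ℝ × ℝ => f p.1 p.2)) (x t : ℝ) :
    pdx (pdt f) x t = pdt (pdx f) x t := by
  set F := fun p : ℝ × ℝ => f p.1 p.2 with hF
  have hDF : ContDiff ℝ (⊤ : ℕ∞) (fderiv ℝ F) := hf.fderiv_right (by simp)
  have key : ∀ v : ℝ × ℝ, fderiv ℝ (fun p : ℝ × ℝ => fderiv ℝ F p v) (x, t)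
      = (fderiv ℝ (fderiv ℝ F) (x, t)).flip v := by
    intro v
    have := fderiv_clm_apply (c := fderiv ℝ F) (u := fun _ : ℝ × ℝ => v)
      ((hDF.differentiable (by simp)) (x, t)) (differentiableAt_const v)
    simpa using this
  have sym : fderiv ℝ (fderiv ℝ F) (x, t) (0, 1) (1, 0)
      = fderiv ℝ (fderiv ℝ F) (x, t) (1, 0) (0, 1) :=
    second_derivative_symmetric (fun y => ((hf.differentiable (by simp)) y).hasFDerivAt)
      ((hDF.differentiable (by simp)) (x, t)).hasFDerivAt _ _
  have h1 : pdx (pdt f) x t = fderiv ℝ (fderiv ℝ F) (x, t) (1, 0) (0, 1) := by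
    rw [pdx_eq (pdt_contDiff hf) x t]
    have he : (fun p : ℝ × ℝ => pdt f p.1 p.2) = fun p : ℝ × ℝ => fderiv ℝ F p (0, 1) := by
      funext p; exact pdt_eq hf p.1 p.2
    rw [he, key (0, 1)]
    simp
  have h2 : pdt (pdx f) x t = fderiv ℝ (fderiv ℝ F) (x, t) (0, 1) (1, 0) := by
    rw [pdt_eq (pdx_contDiff hf) x t]
    have he : (fun p : ℝ × ℝ => pdx f p.1 p.2) = fun p : ℝ × ℝ => fderiv ℝ F p (1, 0) := by
      funext p; exact pdx_eq hf p.1 p.2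
    rw [he, key (1, 0)]
    simp
  rw [h1, h2, sym]

end helpers

/-- Under the substitution `q₁ = −k₁`, `q₀ = −(1/2)k₁' − k₂`, the curvature system
`(k₁)_t = k₁'' + 2k₂'`, `(k₂)_t = (2/3)(k₁k₁' − k₁''') − k₂''` is equivalent to the
Boussinesq system `(q₀)_t + (1/6)q₁''' + (2/3)q₁q₁' = 0`, `(q₁)_t = 2q₀'`. -/
theorem curvature_system_iff_boussinesq
    (k₁ k₂ : ℝ → ℝ → ℝ)
    (hk₁ : ContDiff ℝ (⊤ : ℕ∞) (fun p : ℝ × ℝ => k₁ p.1 p.2))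
    (hk₂ : ContDiff ℝ (⊤ : ℕ∞) (fun p : ℝ × ℝ => k₂ p.1 p.2))
    (q₀ q₁ : ℝ → ℝ → ℝ)
    (hq₁ : ∀ x t, q₁ x t = -k₁ x t)
    (hq₀ : ∀ x t, q₀ x t = -(1/2) * pdx k₁ x t - k₂ x t) :
    ((∀ x t, pdt k₁ x t = pdx (pdx k₁) x t + 2 * pdx k₂ x t) ∧
     (∀ x t, pdt k₂ x t
        = (2/3) * (k₁ x t * pdx k₁ x t - pdx (pdx (pdx k₁)) x t) - pdx (pdx k₂) x t)) ↔
    ((∀ x t, pdt q₀ x t + (1/6) * pdx (pdx (pdx q₁)) x t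
        + (2/3) * q₁ x t * pdx q₁ x t = 0) ∧
     (∀ x t, pdt q₁ x t = 2 * pdx q₀ x t)) := by
  have hk₁x := pdx_contDiff hk₁
  have hk₁xx := pdx_contDiff hk₁x
  have hk₂x := pdx_contDiff hk₂
  -- q₁ derivative identities
  have hq₁x : ∀ x t, pdx q₁ x t = -pdx k₁ x t := by
    intro x t
    have he : (fun x' => q₁ x' t) = fun x' => -k₁ x' t := funext fun x' => hq₁ x' t
    show deriv _ x = _
    rw [he, deriv.fun_neg]; rfl
  have hq₁xx : ∀ x t, pdx (pdx q₁) x t = -pdx (pdx k₁) x t := by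
    intro x t
    have he : (fun x' => pdx q₁ x' t) = fun x' => -pdx k₁ x' t :=
      funext fun x' => hq₁x x' t
    show deriv _ x = _
    rw [he, deriv.fun_neg]; rfl
  have hq₁xxx : ∀ x t, pdx (pdx (pdx q₁)) x t = -pdx (pdx (pdx k₁)) x t := by
    intro x t
    have he : (fun x' => pdx (pdx q₁) x' t) = fun x' => -pdx (pdx k₁) x' t :=
      funext fun x' => hq₁xx x' t
    show deriv _ x = _
    rw [he, deriv.fun_neg]; rfl
  have hq₁t : ∀ x t, pdt q₁ x t = -pdt k₁ x t := by
    intro x t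
    have he : (fun t' => q₁ x t') = fun t' => -k₁ x t' := funext fun t' => hq₁ x t'
    show deriv _ t = _
    rw [he, deriv.fun_neg]; rfl
  -- q₀ derivative identities
  have hq₀x : ∀ x t, pdx q₀ x t = -(1/2) * pdx (pdx k₁) x t - pdx k₂ x t := by
    intro x t
    have he : (fun x' => q₀ x' t) = fun x' => -(1/2) * pdx k₁ x' t - k₂ x' t :=
      funext fun x' => hq₀ x' t
    have d1 : DifferentiableAt ℝ (fun x' => pdx k₁ x' t) x :=
      (hasDerivAt_sliceX hk₁x x t).differentiableAt
    have d2 : DifferentiableAt ℝ (fun x' => k₂ x' t) x :=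
      (hasDerivAt_sliceX hk₂ x t).differentiableAt
    show deriv _ x = _
    rw [he, deriv_fun_sub (d1.const_mul _) d2, deriv_const_mul _ d1]; rfl
  have hq₀t : ∀ x t, pdt q₀ x t = -(1/2) * pdt (pdx k₁) x t - pdt k₂ x t := by
    intro x t
    have he : (fun t' => q₀ x t') = fun t' => -(1/2) * pdx k₁ x t' - k₂ x t' :=
      funext fun t' => hq₀ x t'
    have d1 : DifferentiableAt ℝ (fun t' => pdx k₁ x t') t :=
      (hasDerivAt_sliceT hk₁x x t).differentiableAt
    have d2 : DifferentiableAt ℝ (fun t' => k₂ x t') t :=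
      (hasDerivAt_sliceT hk₂ x t).differentiableAt
    show deriv _ t = _
    rw [he, deriv_fun_sub (d1.const_mul _) d2, deriv_const_mul _ d1]; rfl
  constructor
  · rintro ⟨h1, h2⟩
    have h1x : ∀ x t, pdx (pdt k₁) x t
        = pdx (pdx (pdx k₁)) x t + 2 * pdx (pdx k₂) x t := by
      intro x t
      have he : (fun x' => pdt k₁ x' t)
          = fun x' => pdx (pdx k₁) x' t + 2 * pdx k₂ x' t := funext fun x' => h1 x' t
      have d1 : DifferentiableAt ℝ (fun x' => pdx (pdx k₁) x' t) x :=
        (hasDerivAt_sliceX hk₁xx x t).differentiableAt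
      have d2 : DifferentiableAt ℝ (fun x' => pdx k₂ x' t) x :=
        (hasDerivAt_sliceX hk₂x x t).differentiableAt
      show deriv _ x = _
      rw [he, deriv_fun_add d1 (d2.const_mul _), deriv_const_mul _ d2]; rfl
    refine ⟨fun x t => ?_, fun x t => ?_⟩
    · rw [hq₀t x t, hq₁xxx x t, hq₁ x t, hq₁x x t, ← pdx_pdt_comm hk₁ x t,
        h1x x t, h2 x t]
      ring
    · rw [hq₁t x t, hq₀x x t, h1 x t]
      ring
  · rintro ⟨b1, b2⟩
    have hc1 : ∀ x t, pdt k₁ x t = pdx (pdx k₁) x t + 2 * pdx k₂ x t := by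
      intro x t
      have := b2 x t
      rw [hq₁t x t, hq₀x x t] at this
      linarith
    refine ⟨hc1, fun x t => ?_⟩
    have h1x : pdx (pdt k₁) x t
        = pdx (pdx (pdx k₁)) x t + 2 * pdx (pdx k₂) x t := by
      have he : (fun x' => pdt k₁ x' t)
          = fun x' => pdx (pdx k₁) x' t + 2 * pdx k₂ x' t := funext fun x' => hc1 x' t
      have d1 : DifferentiableAt ℝ (fun x' => pdx (pdx k₁) x' t) x :=
        (hasDerivAt_sliceX hk₁xx x t).differentiableAt
      have d2 : DifferentiableAt ℝ (fun x' => pdx k₂ x' t) x :=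
        (hasDerivAt_sliceX hk₂x x t).differentiableAt
      show deriv _ x = _
      rw [he, deriv_fun_add d1 (d2.const_mul _), deriv_const_mul _ d2]; rfl
    have hb := b1 x t
    rw [hq₀t x t, hq₁xxx x t, hq₁ x t, hq₁x x t, ← pdx_pdt_comm hk₁ x t, h1x] at hb
    linear_combination -hb
end
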